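/- arXiv:1512.06697 — 2 statements merged into one kernel-verified Lean document; each statement's English description precedes it below -/
import Mathlib

section
/- For 1 < j, each coordinate of the j-th block x_j (in the decreasing-magnitude block decomposition into blocks of size s) is at most ||x_{j-1}||_1 / s in absolute value; consequently ||x_j||_2 ≤ ||x_{j-1}||_1 / √s. -/
/-!
Because the coordinates are sorted by decreasing magnitude, every entry of block `j` is dominated
in absolute value by each of the `s` entries of block `j - 1`, hence by their average
`‖x_{j-1}‖₁ / s`. Block `j` has at most `s` nonzero entries, so
`‖x_j‖₂ ≤ √s · ‖x_{j-1}‖₁ / s = ‖x_{j-1}‖₁ / √s`.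
-/

/-- The restriction of `x` to its `j`-th block of `s` coordinates, where the
coordinates are ordered by decreasing magnitude via the sorting permutation `σ`,
extended by zero. -/
noncomputable def blockPiece (n s : ℕ) (x : EuclideanSpace ℝ (Fin (n + 1)))
    (σ : Equiv.Perm (Fin (n + 1))) (j : ℕ) : EuclideanSpace ℝ (Fin (n + 1)) :=
  WithLp.toLp 2 (fun i => if ((σ.symm i : ℕ) / s = j) then x i else 0)

open Finset

def blockPositions (N s m : ℕ) : Finset (Fin N) := univ.filter fun p => (p : ℕ) / s = m

lemma blockPositions_eq_sdiff {N s : ℕ} (hs : 0 < s) (m : ℕ) :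
    blockPositions N s m =
      univ.filter (fun p : Fin N => (p : ℕ) < (m + 1) * s) \
        univ.filter (fun p => (p : ℕ) < m * s) := by
  ext p
  simp only [blockPositions, mem_filter, mem_sdiff, mem_univ, true_and,
    ← Nat.div_lt_iff_lt_mul hs]
  omega

lemma card_blockPositions {N s : ℕ} (hs : 0 < s) (m : ℕ) :
    #(blockPositions N s m) = min N ((m + 1) * s) - min N (m * s) := by
  rw [blockPositions_eq_sdiff hs, card_sdiff_of_subset, Fin.card_filter_val_lt,
    Fin.card_filter_val_lt]
  intro p
  simp only [mem_filter, mem_univ, true_and]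
  exact fun hp => hp.trans_le (Nat.mul_le_mul_right s m.le_succ)

lemma card_blockPositions_le {N s : ℕ} (hs : 0 < s) (m : ℕ) : #(blockPositions N s m) ≤ s := by
  rw [card_blockPositions hs, add_one_mul]
  omega

lemma card_blockPositions_of_mem_succ {N s m : ℕ} (hs : 0 < s) {q : Fin N}
    (hq : q ∈ blockPositions N s (m + 1)) : #(blockPositions N s m) = s := by
  have hq : (m + 1) * s ≤ q := (Nat.le_div_iff_mul_le hs).mp (mem_filter.mp hq).2.ge
  rw [card_blockPositions hs, add_one_mul] at *
  omega

lemma mul_le_sum_blockPositions {N s m : ℕ} (hs : 0 < s) {f : Fin N → ℝ} (hf : Antitone f)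
    {q : Fin N} (hq : q ∈ blockPositions N s (m + 1)) :
    s * f q ≤ ∑ p ∈ blockPositions N s m, f p := by
  have hle : ∀ p ∈ blockPositions N s m, f q ≤ f p := fun p hp =>
    hf <| le_of_lt <| Fin.lt_def.mpr <| Nat.lt_of_div_lt_div (c := s) <| by
      rw [(mem_filter.mp hp).2, (mem_filter.mp hq).2]; exact m.lt_succ_self
  simpa [card_blockPositions_of_mem_succ hs hq] using card_nsmul_le_sum _ f _ hle

lemma EuclideanSpace.norm_le_sqrt_card_mul {ι : Type*} [Fintype ι] (v : EuclideanSpace ℝ ι)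
    (B : Finset ι) (hB : ∀ i ∉ B, v i = 0) {c : ℝ} (hc0 : 0 ≤ c) (hc : ∀ i ∈ B, |v i| ≤ c) :
    ‖v‖ ≤ √(#B : ℝ) * c := by
  have hsq : ∑ i, ‖v i‖ ^ 2 ≤ #B * c ^ 2 := by
    calc ∑ i, ‖v i‖ ^ 2
        = ∑ i ∈ B, ‖v i‖ ^ 2 := (sum_subset (subset_univ B) fun i _ hi => by simp [hB i hi]).symm
      _ ≤ ∑ _i ∈ B, c ^ 2 := sum_le_sum fun i hi => pow_le_pow_left₀ (norm_nonneg _) (hc i hi) 2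
      _ = #B * c ^ 2 := by simp
  rw [EuclideanSpace.norm_eq, ← Real.sqrt_sq hc0, ← Real.sqrt_mul (Nat.cast_nonneg _)]
  exact Real.sqrt_le_sqrt hsq

section blockPiece

variable {n s : ℕ} {x : EuclideanSpace ℝ (Fin (n + 1))} {σ : Equiv.Perm (Fin (n + 1))}

lemma blockPiece_apply (j : ℕ) (i : Fin (n + 1)) :
    blockPiece n s x σ j i = if σ.symm i ∈ blockPositions (n + 1) s j then x i else 0 := by
  simp [blockPiece, blockPositions]

lemma sum_abs_blockPiece (j : ℕ) :
    ∑ i, |blockPiece n s x σ j i| = ∑ p ∈ blockPositions (n + 1) s j, |x (σ p)| := by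
  rw [← Equiv.sum_comp σ]
  simp only [blockPiece_apply, Equiv.symm_apply_apply, apply_ite abs, abs_zero, sum_ite_mem,
    univ_inter]

lemma abs_blockPiece_succ_le (hs : 0 < s) (hσ : Antitone fun p => |x (σ p)|) (m : ℕ)
    (i : Fin (n + 1)) :
    |blockPiece n s x σ (m + 1) i| ≤ (∑ i, |blockPiece n s x σ m i|) / s := by
  rw [sum_abs_blockPiece, le_div_iff₀ (Nat.cast_pos.mpr hs), blockPiece_apply]
  split_ifs with hi
  · simpa [mul_comm] using mul_le_sum_blockPositions hs hσ hi
  · simpa using sum_nonneg fun p _ => abs_nonneg (x (σ p))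

lemma norm_blockPiece_succ_le (hs : 0 < s) (hσ : Antitone fun p => |x (σ p)|) (m : ℕ) :
    ‖blockPiece n s x σ (m + 1)‖ ≤ (∑ i, |blockPiece n s x σ m i|) / √s := by
  calc ‖blockPiece n s x σ (m + 1)‖
      ≤ √(#((blockPositions (n + 1) s (m + 1)).map σ.toEmbedding) : ℝ) *
          ((∑ i, |blockPiece n s x σ m i|) / s) := by
        refine EuclideanSpace.norm_le_sqrt_card_mul _ _ (fun i hi => ?_) (by positivity)
          fun i _ => abs_blockPiece_succ_le hs hσ m i
        rw [blockPiece_apply, if_neg]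
        simpa using hi
    _ ≤ √s * ((∑ i, |blockPiece n s x σ m i|) / s) := by
        rw [card_map]
        gcongr
        exact_mod_cast card_blockPositions_le hs _
    _ = (∑ i, |blockPiece n s x σ m i|) / √s := by
        rw [mul_div_left_comm, Real.sqrt_div_self', mul_one_div]

end blockPiece

/-- For `j ≥ 1`, each coordinate of the `j`-th block `x_j` is at most
`‖x_{j-1}‖₁ / s` in absolute value; consequently `‖x_j‖₂ ≤ ‖x_{j-1}‖₁ / √s`. -/
theorem block_coord_and_norm_bound (n s : ℕ) (hs : 0 < s)
    (x : EuclideanSpace ℝ (Fin (n + 1))) (σ : Equiv.Perm (Fin (n + 1)))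
    (hσ : ∀ a b : Fin (n + 1), a ≤ b → |x (σ b)| ≤ |x (σ a)|)
    (j : ℕ) (hj : 1 ≤ j) :
    (∀ i, |blockPiece n s x σ j i| ≤ (∑ i, |blockPiece n s x σ (j - 1) i|) / s) ∧
      ‖blockPiece n s x σ j‖ ≤ (∑ i, |blockPiece n s x σ (j - 1) i|) / Real.sqrt s := by
  obtain ⟨m, rfl⟩ := Nat.exists_eq_add_of_le' hj
  rw [Nat.add_sub_cancel]
  exact ⟨abs_blockPiece_succ_le hs hσ m, norm_blockPiece_succ_le hs hσ m⟩
end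

section
/- The set A = {e_1, ..., e_n, (1,...,1)/√n} of n+1 points on the unit sphere S^{n-1} ⊂ R^n is shattered by spherical caps: for every subset A'' ⊆ A there exists a half-space whose intersection with A equals A''. -/
/-! The `n + 1` points are affinely independent as soon as `n ≠ 1`: the coordinate sum is `1` on
the affine hull of `e_1, …, e_n` but equals `√n` at `(1, …, 1)/√n`. Hence every `0/1`-labelling of
them is the restriction of an affine function `x ↦ ⟪x, θ⟫ + c`, and thresholding that function at
`1/2` cuts out any prescribed subset. For `n = 1` the two points coincide. -/

def ShatteredByHalfSpaces {E : Type*} [NormedAddCommGroup E] [InnerProductSpace ℝ E]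
    (s : Set E) : Prop :=
  ∀ B ⊆ s, ∃ θ : E, ∃ t : ℝ, s ∩ {x | t ≤ (inner ℝ x θ : ℝ)} = B

section AffineInterpolation

variable {E : Type*} [NormedAddCommGroup E] [InnerProductSpace ℝ E]

theorem shatteredByHalfSpaces_of_forall_exists_affine_eq {s : Set E}
    (h : ∀ f : E → ℝ, ∃ θ : E, ∃ c : ℝ, ∀ x ∈ s, inner ℝ x θ + c = f x) :
    ShatteredByHalfSpaces s := by
  classical
  intro B hB
  obtain ⟨θ, c, hθ⟩ := h (B.indicator fun _ => 1)
  refine ⟨θ, 1 / 2 - c, Set.ext fun x => ⟨fun ⟨hxs, hx⟩ => ?_, fun hxB => ⟨hB hxB, ?_⟩⟩⟩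
  · by_contra hxB
    have hx0 := hθ x hxs
    rw [Set.indicator_of_notMem hxB] at hx0
    have hx : 1 / 2 - c ≤ inner ℝ x θ := hx
    linarith
  · have hx1 := hθ x (hB hxB)
    rw [Set.indicator_of_mem hxB] at hx1
    exact (by linarith : 1 / 2 - c ≤ inner ℝ x θ)

theorem Set.Subsingleton.forall_exists_affine_eq {s : Set E} (hs : s.Subsingleton)
    (f : E → ℝ) : ∃ θ : E, ∃ c : ℝ, ∀ x ∈ s, inner ℝ x θ + c = f x := by
  rcases hs.eq_empty_or_singleton with rfl | ⟨x₀, rfl⟩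
  · exact ⟨0, 0, by simp⟩
  · exact ⟨0, f x₀, by simp⟩

end AffineInterpolation

theorem forall_exists_affine_eq_on_range_single_union {ι : Type*} [Fintype ι] [DecidableEq ι]
    (v : EuclideanSpace ℝ ι) (hv : ∑ i, v i ≠ 1) (f : EuclideanSpace ℝ ι → ℝ) :
    ∃ θ : EuclideanSpace ℝ ι, ∃ c : ℝ,
      ∀ x ∈ Set.range (fun i => EuclideanSpace.single i (1 : ℝ)) ∪ {v}, inner ℝ x θ + c = f x := by
  set a := fun i => f (EuclideanSpace.single i 1)
  set c := (f v - ∑ i, a i * v i) / (1 - ∑ i, v i)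
  refine ⟨WithLp.toLp 2 fun i => a i - c, c, ?_⟩
  rintro x (⟨i, rfl⟩ | hx)
  · simp [EuclideanSpace.inner_single_left, a]
  · have hc : c * (1 - ∑ i, v i) = f v - ∑ i, a i * v i :=
      div_mul_cancel₀ _ (sub_ne_zero.mpr hv.symm)
    rw [Set.mem_singleton_iff.mp hx, PiLp.inner_apply]
    simp only [RCLike.inner_apply, conj_trivial, sub_mul, Finset.sum_sub_distrib,
      ← Finset.mul_sum]
    linear_combination hc

theorem basis_and_ones_shattered_general (n : ℕ) :
    ∀ B ⊆ (Set.range fun i : Fin n => EuclideanSpace.single i (1 : ℝ)) ∪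
        {(WithLp.toLp 2 (fun _ => (Real.sqrt n)⁻¹) : EuclideanSpace ℝ (Fin n))},
      ∃ θ : EuclideanSpace ℝ (Fin n), ∃ t : ℝ,
        ((Set.range fun i : Fin n => EuclideanSpace.single i (1 : ℝ)) ∪
            {(WithLp.toLp 2 (fun _ => (Real.sqrt n)⁻¹) : EuclideanSpace ℝ (Fin n))}) ∩
          {x : EuclideanSpace ℝ (Fin n) | t ≤ (inner ℝ x θ : ℝ)} = B := by
  refine shatteredByHalfSpaces_of_forall_exists_affine_eq fun f => ?_
  by_cases hn : n = 1
  · subst hn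
    have hmem : WithLp.toLp 2 (fun _ => (Real.sqrt (1 : ℕ))⁻¹) ∈
        Set.range fun i : Fin 1 => EuclideanSpace.single i (1 : ℝ) :=
      ⟨0, by ext i; simp [Subsingleton.elim i 0]⟩
    rw [Set.union_singleton, Set.insert_eq_of_mem hmem]
    exact (Set.subsingleton_range _).forall_exists_affine_eq f
  · refine forall_exists_affine_eq_on_range_single_union _ ?_ f
    simpa [← div_eq_mul_inv, Real.div_sqrt] using hn

/-- The set `A = {e_1, …, e_n, (1,…,1)/√n}` of `n+1` points on the unit sphere
`S^{n-1} ⊆ ℝⁿ` is shattered by half-spaces (hence by spherical caps): for every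
subset `B ⊆ A` there is a half-space `{x : t ≤ ⟪x,θ⟫}` with `A ∩ {x : t ≤ ⟪x,θ⟫} = B`. -/
theorem basis_and_ones_shattered (n : ℕ) (hn : 0 < n) :
    ∀ B ⊆ (Set.range fun i : Fin n => EuclideanSpace.single i (1 : ℝ)) ∪
        {(WithLp.toLp 2 (fun _ => (Real.sqrt n)⁻¹) : EuclideanSpace ℝ (Fin n))},
      ∃ θ : EuclideanSpace ℝ (Fin n), ∃ t : ℝ,
        ((Set.range fun i : Fin n => EuclideanSpace.single i (1 : ℝ)) ∪
            {(WithLp.toLp 2 (fun _ => (Real.sqrt n)⁻¹) : EuclideanSpace ℝ (Fin n))}) ∩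
          {x : EuclideanSpace ℝ (Fin n) | t ≤ (inner ℝ x θ : ℝ)} = B :=
  basis_and_ones_shattered_general n
end
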